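/- arXiv:2407.10015 — 2 statements merged into one kernel-verified Lean document; each statement's English description precedes it below -/
import Mathlib

section
/- Let F be a treemap. Then the path set [F(T)] = {f : ℕ → ℕ | every finite initial segment of f belongs to F(T)}, equipped with the subspace topology inherited from Baire space, is homeomorphic to Baire space. In particular [F(T)] is nonempty, closed in Baire space, and not compact. -/
/-- A treemap is `F : ℕ^{<ℕ} → ℕ^{<ℕ}` (strings as lists of naturals) with
`F(σ)⌢i ⊆ F(σ⌢i)` for all strings `σ` and all `i : ℕ`. -/
def Treemap (F : List ℕ → List ℕ) : Prop :=
  ∀ (σ : List ℕ) (i : ℕ), (F σ ++ [i]) <+: F (σ ++ [i])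

/-- The tree `F(T) = {τ | ∃ σ, τ ⊆ F(σ)}` determined by a treemap `F`. -/
def treeOf (F : List ℕ → List ℕ) : Set (List ℕ) :=
  {τ | ∃ σ : List ℕ, τ <+: F σ}

/-- The initial segment `f↾n = (f 0, …, f (n-1))` of `f : ℕ → ℕ`. -/
def restrict (f : ℕ → ℕ) (n : ℕ) : List ℕ :=
  (List.range n).map f

/-- `σ` is an initial segment of `f : ℕ → ℕ`. -/
def IsInitSeg (σ : List ℕ) (f : ℕ → ℕ) : Prop :=
  σ = restrict f σ.length

/-- The set of paths through the tree `F(T)` of a treemap `F`. -/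
def pathSet (F : List ℕ → List ℕ) : Set (ℕ → ℕ) :=
  {f | ∀ n : ℕ, restrict f n ∈ treeOf F}

/-!
A treemap `F` sends each `f` in Baire space to the path `⋃ₙ F(f↾n)` of `F(T)`. Conversely a
path `g` is decoded letter by letter: if `F(σ)` is an initial segment of `g`, then so is
`F(σ⌢i)` for `i = g |F(σ)|`, because a treemap maps incomparable strings to incomparable
strings. Each coordinate of either map depends on finitely many coordinates of its argument,
so both are continuous.
-/

open Topology

namespace List

variable {α : Type*}

theorem eq_of_append_singleton_prefix {l m : List α} {a b : α}
    (ha : l ++ [a] <+: m) (hb : l ++ [b] <+: m) : a = b := by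
  simpa using (prefix_of_prefix_length_le ha hb (by simp)).eq_of_length (by simp)

theorem exists_append_singleton_prefix_of_prefix_of_ne {l m : List α} (h : l <+: m)
    (hne : l ≠ m) : ∃ a, l ++ [a] <+: m := by
  obtain ⟨t, rfl⟩ := h
  obtain ⟨a, t, rfl⟩ := exists_cons_of_ne_nil (by simpa using hne)
  exact ⟨a, t, by simp⟩

theorem exists_branch_of_not_prefix_of_not_prefix :
    ∀ {l m : List α}, ¬ l <+: m → ¬ m <+: l →
      ∃ ρ a b, a ≠ b ∧ ρ ++ [a] <+: l ∧ ρ ++ [b] <+: m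
  | [], _, h, _ | _, [], _, h => absurd nil_prefix h
  | a :: l, b :: m, h₁, h₂ => by
    by_cases hab : a = b
    · subst hab
      simp only [cons_prefix_cons, true_and] at h₁ h₂
      obtain ⟨ρ, c, d, hcd, hc, hd⟩ := exists_branch_of_not_prefix_of_not_prefix h₁ h₂
      exact ⟨a :: ρ, c, d, hcd, by simpa using hc, by simpa using hd⟩
    · exact ⟨[], a, b, hab, by simp, by simp⟩

end List

section Restrict

@[simp] theorem restrict_length (f : ℕ → ℕ) (n : ℕ) : (restrict f n).length = n := by
  simp [restrict]

@[simp] theorem getElem_restrict (f : ℕ → ℕ) {n m : ℕ} (h : m < (restrict f n).length) :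
    (restrict f n)[m] = f m := by
  simp [restrict]

theorem restrict_succ (f : ℕ → ℕ) (n : ℕ) : restrict f (n + 1) = restrict f n ++ [f n] := by
  simp [restrict, List.range_succ]

theorem restrict_prefix_restrict (f : ℕ → ℕ) {m n : ℕ} (h : m ≤ n) :
    restrict f m <+: restrict f n := by
  rw [List.prefix_iff_eq_take]
  exact List.ext_getElem (by simp [h]) fun _ _ _ => by simp

theorem apply_eq_of_restrict_eq {f g : ℕ → ℕ} {n m : ℕ} (h : restrict f n = restrict g n)
    (hm : m < n) : f m = g m := by
  simpa [restrict, hm] using congrArg (·[m]?) h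

theorem isLocallyConstant_restrict (n : ℕ) :
    IsLocallyConstant fun f : ℕ → ℕ => restrict f n := by
  have hofFn : (fun f : ℕ → ℕ => restrict f n) =
      (fun v : Fin n → ℕ => List.ofFn v) ∘ fun f i => f i := by
    funext f
    exact List.ext_getElem (by simp) fun _ _ _ => by simp
  rw [hofFn]
  exact (IsLocallyConstant.of_discrete _).comp_continuous
    (continuous_pi fun i => continuous_apply _)

end Restrict

theorem IsLocallyConstant.apply_self {ι Y : Type*} [TopologicalSpace Y] [DiscreteTopology Y]
    {φ : (ι → Y) → ι} (hφ : IsLocallyConstant φ) :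
    IsLocallyConstant fun g : ι → Y => g (φ g) := by
  rw [IsLocallyConstant.iff_eventually_eq]
  intro g
  have hcoord : ∀ᶠ g' in 𝓝 g, g' (φ g) = g (φ g) :=
    ((IsLocallyConstant.iff_continuous _).2 (continuous_apply (φ g))).eventually_eq g
  filter_upwards [hφ.eventually_eq g, hcoord] with g' h₁ h₂
  rw [h₁, h₂]

instance Function.noncompactSpace {ι Y : Type*} [Nonempty ι] [TopologicalSpace Y]
    [NoncompactSpace Y] : NoncompactSpace (ι → Y) := by
  refine ⟨fun h => noncompact_univ Y ?_⟩
  have hsurj : Function.Surjective fun g : ι → Y => g (Classical.arbitrary ι) :=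
    fun y => ⟨fun _ => y, rfl⟩
  simpa [hsurj.range_eq] using h.image (continuous_apply (Classical.arbitrary ι))

namespace Treemap

variable {F : List ℕ → List ℕ} (hF : Treemap F)
include hF

theorem mono {σ τ : List ℕ} (h : σ <+: τ) : F σ <+: F τ := by
  obtain ⟨t, rfl⟩ := h
  induction t using List.reverseRecOn with
  | nil => simp
  | append_singleton t i ih =>
    rw [← List.append_assoc]
    exact ih.trans ((List.prefix_append _ _).trans (hF _ i))

theorem length_le (σ : List ℕ) : σ.length ≤ (F σ).length := by
  induction σ using List.reverseRecOn with
  | nil => simp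
  | append_singleton σ i ih =>
    have := (hF σ i).length_le
    simp only [List.length_append, List.length_singleton] at this ⊢
    omega

theorem prefix_or_prefix_of_prefix {σ τ : List ℕ} (h : F σ <+: F τ) :
    σ <+: τ ∨ τ <+: σ := by
  by_contra hc
  push Not at hc
  obtain ⟨ρ, i, j, hij, hi, hj⟩ := List.exists_branch_of_not_prefix_of_not_prefix hc.1 hc.2
  exact hij <| List.eq_of_append_singleton_prefix
    (((hF ρ i).trans (hF.mono hi)).trans h) ((hF ρ j).trans (hF.mono hj))

theorem append_singleton_prefix_of_prefix {σ τ : List ℕ} {i : ℕ} (h : F σ ++ [i] <+: F τ) :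
    σ ++ [i] <+: τ := by
  have hlen := h.length_le
  simp only [List.length_append, List.length_singleton] at hlen
  have hστ : σ <+: τ := by
    refine (hF.prefix_or_prefix_of_prefix ((List.prefix_append _ _).trans h)).resolve_right ?_
    intro hτσ
    have := (hF.mono hτσ).length_le
    omega
  obtain ⟨j, hj⟩ :=
    List.exists_append_singleton_prefix_of_prefix_of_ne hστ (by rintro rfl; omega)
  obtain rfl := List.eq_of_append_singleton_prefix h ((hF σ j).trans (hF.mono hj))
  exact hj

end Treemap

section Coding

variable {F : List ℕ → List ℕ}

/-- The path `⋃ₙ F(f↾n)`; the default `0` is never used, by `Treemap.length_le`. -/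
def imagePath (F : List ℕ → List ℕ) (f : ℕ → ℕ) (n : ℕ) : ℕ :=
  (F (restrict f (n + 1))).getD n 0

/-- The strings `σₖ` with `F(σₖ)` an initial segment of the path `g`. -/
def preimagePrefix (F : List ℕ → List ℕ) (g : ℕ → ℕ) : ℕ → List ℕ
  | 0 => []
  | k + 1 => preimagePrefix F g k ++ [g (F (preimagePrefix F g k)).length]

def preimagePath (F : List ℕ → List ℕ) (g : ℕ → ℕ) (k : ℕ) : ℕ :=
  g (F (preimagePrefix F g k)).length

theorem restrict_preimagePath (g : ℕ → ℕ) (k : ℕ) :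
    restrict (preimagePath F g) k = preimagePrefix F g k := by
  induction k with
  | zero => rfl
  | succ k ih => rw [restrict_succ, ih]; rfl

theorem continuous_imagePath (F : List ℕ → List ℕ) : Continuous (imagePath F) :=
  continuous_pi fun n =>
    ((isLocallyConstant_restrict (n + 1)).comp fun σ => (F σ).getD n 0).continuous

theorem isLocallyConstant_preimagePrefix (F : List ℕ → List ℕ) (k : ℕ) :
    IsLocallyConstant fun g => preimagePrefix F g k := by
  induction k with
  | zero => exact IsLocallyConstant.const _
  | succ k ih => exact ih.comp₂ (ih.comp (F · |>.length)).apply_self (· ++ [·])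

theorem continuous_preimagePath (F : List ℕ → List ℕ) : Continuous (preimagePath F) :=
  continuous_pi fun k =>
    ((isLocallyConstant_preimagePrefix F k).comp (F · |>.length)).apply_self.continuous

theorem isClosed_pathSet (F : List ℕ → List ℕ) : IsClosed (pathSet F) := by
  rw [pathSet, Set.ofPred_forall]
  exact isClosed_iInter fun n => isOpen_compl_iff.1 (isLocallyConstant_restrict n (treeOf F)ᶜ)

theorem restrict_length_eq_of_mem_pathSet {g : ℕ → ℕ} (hg : g ∈ pathSet F) {σ : List ℕ}
    (h : ∀ τ, restrict g (F σ).length <+: F τ → F σ <+: F τ) :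
    restrict g (F σ).length = F σ := by
  obtain ⟨τ, hτ⟩ := hg (F σ).length
  exact (List.prefix_of_prefix_length_le hτ (h τ hτ) (by simp)).eq_of_length (by simp)

namespace Treemap

variable (hF : Treemap F)
include hF

theorem getElem_eq_imagePath (f : ℕ → ℕ) {n m : ℕ} (h : m < (F (restrict f n)).length) :
    (F (restrict f n))[m] = imagePath F f m := by
  have hm : m < (F (restrict f (m + 1))).length :=
    (hF.length_le _).trans_lt' (by simp)
  rw [imagePath, List.getD_eq_getElem _ _ hm]
  rcases le_total n (m + 1) with hle | hle
  · exact (hF.mono (restrict_prefix_restrict f hle)).getElem h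
  · exact ((hF.mono (restrict_prefix_restrict f hle)).getElem hm).symm

theorem restrict_imagePath (f : ℕ → ℕ) (n : ℕ) :
    restrict (imagePath F f) (F (restrict f n)).length = F (restrict f n) :=
  List.ext_getElem (by simp) fun _ _ h => by rw [getElem_restrict, hF.getElem_eq_imagePath f h]

theorem imagePath_mem_pathSet (f : ℕ → ℕ) : imagePath F f ∈ pathSet F := fun n =>
  ⟨restrict f n, by
    rw [← hF.restrict_imagePath f n]
    exact restrict_prefix_restrict _ (by simpa using hF.length_le (restrict f n))⟩

theorem imagePath_apply_length (f : ℕ → ℕ) (k : ℕ) :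
    imagePath F f (F (restrict f k)).length = f k := by
  have hk : F (restrict f k) ++ [f k] <+: F (restrict f (k + 1)) := by
    rw [restrict_succ]; exact hF _ _
  have hlt : (F (restrict f k)).length < (F (restrict f (k + 1))).length := by
    simpa using hk.length_le
  rw [← hF.getElem_eq_imagePath f hlt, ← hk.getElem (by simp)]
  simp

theorem preimagePrefix_imagePath (f : ℕ → ℕ) (k : ℕ) :
    preimagePrefix F (imagePath F f) k = restrict f k := by
  induction k with
  | zero => rfl
  | succ k ih => rw [preimagePrefix, ih, hF.imagePath_apply_length, restrict_succ]

theorem preimagePath_imagePath (f : ℕ → ℕ) : preimagePath F (imagePath F f) = f :=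
  funext fun k => by rw [preimagePath, hF.preimagePrefix_imagePath, hF.imagePath_apply_length]

theorem restrict_length_append_of_mem_pathSet {g : ℕ → ℕ} (hg : g ∈ pathSet F) {σ : List ℕ}
    (hσ : restrict g (F σ).length = F σ) :
    restrict g (F (σ ++ [g (F σ).length])).length = F (σ ++ [g (F σ).length]) := by
  refine restrict_length_eq_of_mem_pathSet hg fun τ hτ => hF.mono ?_
  refine hF.append_singleton_prefix_of_prefix (.trans ?_ hτ)
  have hsucc : F σ ++ [g (F σ).length] = restrict g ((F σ).length + 1) := by
    rw [restrict_succ, hσ]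
  rw [hsucc]
  exact restrict_prefix_restrict g (by simpa using (hF _ _).length_le)

theorem restrict_preimagePrefix {g : ℕ → ℕ} (hg : g ∈ pathSet F) (k : ℕ) :
    restrict g (F (preimagePrefix F g k)).length = F (preimagePrefix F g k) := by
  induction k with
  | zero => exact restrict_length_eq_of_mem_pathSet hg fun τ _ => hF.mono List.nil_prefix
  | succ k ih => exact hF.restrict_length_append_of_mem_pathSet hg ih

theorem imagePath_preimagePath {g : ℕ → ℕ} (hg : g ∈ pathSet F) :
    imagePath F (preimagePath F g) = g := by
  funext n
  refine apply_eq_of_restrict_eq (n := (F (preimagePrefix F g (n + 1))).length) ?_ ?_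
  · rw [← restrict_preimagePath, hF.restrict_imagePath, restrict_preimagePath,
      hF.restrict_preimagePrefix hg]
  · simpa [← restrict_preimagePath (F := F) g] using
      hF.length_le (restrict (preimagePath F g) (n + 1))

def pathSetHomeomorph : pathSet F ≃ₜ (ℕ → ℕ) where
  toFun g := preimagePath F g
  invFun f := ⟨imagePath F f, hF.imagePath_mem_pathSet f⟩
  left_inv g := Subtype.ext (hF.imagePath_preimagePath g.2)
  right_inv := hF.preimagePath_imagePath
  continuous_toFun := (continuous_preimagePath F).comp continuous_subtype_val
  continuous_invFun := (continuous_imagePath F).subtype_mk _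

end Treemap

end Coding

/-- The path set `[F(T)]` of a treemap `F`, with the subspace topology from Baire space,
is homeomorphic to Baire space; in particular it is nonempty, closed, and not compact. -/
theorem pathSet_homeomorph_baire (F : List ℕ → List ℕ) (hF : Treemap F) :
    Nonempty (↥(pathSet F) ≃ₜ (ℕ → ℕ)) ∧
    (pathSet F).Nonempty ∧ IsClosed (pathSet F) ∧ ¬ IsCompact (pathSet F) := by
  let e := hF.pathSetHomeomorph
  refine ⟨⟨e⟩, ⟨e.symm 0, (e.symm 0).2⟩, isClosed_pathSet F, fun hc => ?_⟩
  have : CompactSpace (pathSet F) := isCompact_iff_compactSpace.1 hc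
  exact not_compactSpace_iff.2 inferInstance e.compactSpace
end

section
/- Let F be a treemap, let σ, τ be strings with σ a prefix of τ, let λ be a string incomparable with σ, and let m ∈ ℕ. Define G : ℕ^{<ℕ} → ℕ^{<ℕ} by: G(γ) = F(τ⌢γ′) if γ = σ⌢γ′ for some string γ′; G(γ) = F(λ⌢m⌢γ′) if γ = λ⌢γ′ for some string γ′; and G(γ) = F(γ) otherwise (these cases are mutually exclusive since σ and λ are incomparable). Then G is a treemap. -/
lemma treemap_mono {F : List ℕ → List ℕ} (hF : Treemap F) :
    ∀ δ σ : List ℕ, F σ <+: F (σ ++ δ) := by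
  intro δ
  induction δ using List.reverseRecOn with
  | nil => intro σ; simp
  | append_singleton δ i ih =>
    intro σ
    have h1 := ih σ
    have h2 := hF (σ ++ δ) i
    have : F σ <+: F (σ ++ δ) ++ [i] := h1.trans (List.prefix_append _ _)
    simpa [List.append_assoc] using this.trans h2

lemma eq_snoc_of_prefix {σ γ : List ℕ} {i : ℕ} (h : σ <+: γ ++ [i]) (hn : ¬ σ <+: γ) :
    σ = γ ++ [i] := by
  rcases Nat.lt_or_ge γ.length σ.length with hl | hl
  · refine h.eq_of_length ?_
    have h1 := h.length_le
    simp only [List.length_append, List.length_cons, List.length_nil] at h1 ⊢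
    omega
  · exact absurd (List.prefix_of_prefix_length_le h (List.prefix_append _ _) (by simpa using hl)) hn


/-- Simultaneously advancing above `σ` (to `τ ⊇ σ`) and rerouting above a string `λ`
incomparable with `σ` yields a treemap. -/
theorem advance_and_reroute_treemap (F G : List ℕ → List ℕ) (hF : Treemap F)
    (σ τ l : List ℕ) (m : ℕ) (hστ : σ <+: τ)
    (hinc₁ : ¬ l <+: σ) (hinc₂ : ¬ σ <+: l)
    (hG₁ : ∀ γ' : List ℕ, G (σ ++ γ') = F (τ ++ γ'))
    (hG₂ : ∀ γ' : List ℕ, G (l ++ γ') = F (l ++ [m] ++ γ'))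
    (hG₃ : ∀ γ : List ℕ, ¬ σ <+: γ → ¬ l <+: γ → G γ = F γ) :
    Treemap G := by
  intro γ i
  by_cases hσ : σ <+: γ
  · obtain ⟨γ', rfl⟩ := hσ
    rw [hG₁ γ', List.append_assoc σ γ' [i], hG₁ (γ' ++ [i]), ← List.append_assoc]
    exact hF (τ ++ γ') i
  · by_cases hl : l <+: γ
    · obtain ⟨γ', rfl⟩ := hl
      rw [hG₂ γ', List.append_assoc l γ' [i], hG₂ (γ' ++ [i])]
      simpa [List.append_assoc] using hF (l ++ [m] ++ γ') i
    · rw [hG₃ γ hσ hl]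
      by_cases hσ' : σ <+: γ ++ [i]
      · have heq := eq_snoc_of_prefix hσ' hσ
        have : G (γ ++ [i]) = F τ := by
          rw [← heq]
          have := hG₁ []
          simpa using this
        rw [this]
        obtain ⟨δ, rfl⟩ := hστ
        have h1 : F γ ++ [i] <+: F σ := by rw [heq]; exact hF γ i
        exact h1.trans (treemap_mono hF δ σ)
      · by_cases hl' : l <+: γ ++ [i]
        · have heq := eq_snoc_of_prefix hl' hl
          have : G (γ ++ [i]) = F (l ++ [m]) := by
            rw [← heq]
            have := hG₂ []
            simpa using this
          rw [this]
          have h1 : F γ ++ [i] <+: F l := by rw [heq]; exact hF γ i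
          exact h1.trans (treemap_mono hF [m] l)
        · rw [hG₃ (γ ++ [i]) hσ' hl']
          exact hF γ i
end
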